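/- arXiv:1412.4463 — 2 statements merged into one kernel-verified Lean document; each statement's English description precedes it below -/
import Mathlib

section
/- If a k-REM e defines a binary relation S on the nodes of a data graph G (that is, S = { (u,v) | u →w v for some w ∈ L(e) }), then for every pair (u,v) ∈ S there exists a basic k-REM e′ with L(e′) ⊆ L(e) that is a k-REM witness for (u,v) in S. -/
/-- A data path `d₀ a₀ d₁ a₁ … a_{m−1} d_m`: a first data value followed by a
list of (letter, data value) pairs. -/
structure DataPath (A D : Type) where
  head : D
  tail : List (A × D)

namespace DataPath

/-- The last data value of a data path. -/
def lastVal {A D : Type} (w : DataPath A D) : D :=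
  ((w.tail.getLast?).map Prod.snd).getD w.head

/-- Concatenation of data paths (meaningful when `w₁.lastVal = w₂.head`). -/
def comp {A D : Type} (w₁ w₂ : DataPath A D) : DataPath A D :=
  ⟨w₁.head, w₁.tail ++ w₂.tail⟩

/-- Apply a map on data values to all data values of a data path. -/
def dmap {A D : Type} (π : D → D) (w : DataPath A D) : DataPath A D :=
  ⟨π w.head, w.tail.map (fun p => (p.1, π p.2))⟩

end DataPath

/-- Conditions over `k` registers. -/
inductive Cond (k : ℕ) where
  | top : Cond k
  | eq : Fin k → Cond k
  | ne : Fin k → Cond k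
  | conj : Cond k → Cond k → Cond k
  | disj : Cond k → Cond k → Cond k
  | neg : Cond k → Cond k

/-- Satisfaction of a condition at data value `d` under assignment `τ`
(`none` is the empty register `⊥`, unequal to every data value). -/
def CondSat {D : Type} {k : ℕ} (d : D) (τ : Fin k → Option D) : Cond k → Prop
  | .top => True
  | .eq i => τ i = some d
  | .ne i => τ i ≠ some d
  | .conj c₁ c₂ => CondSat d τ c₁ ∧ CondSat d τ c₂
  | .disj c₁ c₂ => CondSat d τ c₁ ∨ CondSat d τ c₂
  | .neg c => ¬ CondSat d τ c

/-- Regular expressions with memory over alphabet `A` with `k` registers. -/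
inductive REM (A : Type) (k : ℕ) where
  | eps : REM A k
  | letter : A → REM A k
  | plus : REM A k → REM A k → REM A k
  | concat : REM A k → REM A k → REM A k
  | iter : REM A k → REM A k
  | test : REM A k → Cond k → REM A k
  | bind : List (Fin k) → REM A k → REM A k

/-- Store `d` in each of the registers in `rs`. -/
def updReg {D : Type} {k : ℕ} (σ : Fin k → Option D) (rs : List (Fin k)) (d : D) :
    Fin k → Option D :=
  fun i => if i ∈ rs then some d else σ i

/-- The satisfaction relation `(e, w, σ) ⊢ σ'` of REMs on data paths. -/
inductive REMSat {A D : Type} {k : ℕ} :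
    REM A k → DataPath A D → (Fin k → Option D) → (Fin k → Option D) → Prop
  | eps (d : D) (σ : Fin k → Option D) : REMSat .eps ⟨d, []⟩ σ σ
  | letter (a : A) (d₁ d₂ : D) (σ : Fin k → Option D) :
      REMSat (.letter a) ⟨d₁, [(a, d₂)]⟩ σ σ
  | plusL {e₁ e₂ w σ σ'} : REMSat e₁ w σ σ' → REMSat (.plus e₁ e₂) w σ σ'
  | plusR {e₁ e₂ w σ σ'} : REMSat e₂ w σ σ' → REMSat (.plus e₁ e₂) w σ σ'
  | concat {e₁ e₂ w₁ w₂ σ σ₁ σ'} : w₁.lastVal = w₂.head →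
      REMSat e₁ w₁ σ σ₁ → REMSat e₂ w₂ σ₁ σ' →
      REMSat (.concat e₁ e₂) (w₁.comp w₂) σ σ'
  | iterBase {e w σ σ'} : REMSat e w σ σ' → REMSat (.iter e) w σ σ'
  | iterStep {e w₁ w₂ σ σ₁ σ'} : w₁.lastVal = w₂.head →
      REMSat e w₁ σ σ₁ → REMSat (.iter e) w₂ σ₁ σ' →
      REMSat (.iter e) (w₁.comp w₂) σ σ'
  | test {e c w σ σ'} : REMSat e w σ σ' → CondSat w.lastVal σ' c →
      REMSat (.test e c) w σ σ'
  | bind {rs e w σ σ'} : REMSat e w (updReg σ rs w.head) σ' →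
      REMSat (.bind rs e) w σ σ'

/-- The language of a `k`-REM: data paths accepted starting from the empty
assignment `⊥^k`. -/
def REMLang {A D : Type} {k : ℕ} (e : REM A k) : Set (DataPath A D) :=
  {w | ∃ σ' : Fin k → Option D, REMSat e w (fun _ => none) σ'}

/-- Regular expressions with equality over alphabet `A`. -/
inductive REE (A : Type) where
  | eps : REE A
  | letter : A → REE A
  | plus : REE A → REE A → REE A
  | concat : REE A → REE A → REE A
  | iter : REE A → REE A
  | eqTest : REE A → REE A
  | neTest : REE A → REE A

/-- The language of data paths of an REE. -/
inductive REELang {A D : Type} : REE A → DataPath A D → Prop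
  | eps (d : D) : REELang .eps ⟨d, []⟩
  | letter (a : A) (d₁ d₂ : D) : REELang (.letter a) ⟨d₁, [(a, d₂)]⟩
  | plusL {e₁ e₂ w} : REELang e₁ w → REELang (.plus e₁ e₂) w
  | plusR {e₁ e₂ w} : REELang e₂ w → REELang (.plus e₁ e₂) w
  | concat {e₁ e₂ w₁ w₂} : w₁.lastVal = w₂.head →
      REELang e₁ w₁ → REELang e₂ w₂ → REELang (.concat e₁ e₂) (w₁.comp w₂)
  | iterBase {e w} : REELang e w → REELang (.iter e) w
  | iterStep {e w₁ w₂} : w₁.lastVal = w₂.head →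
      REELang e w₁ → REELang (.iter e) w₂ → REELang (.iter e) (w₁.comp w₂)
  | eqTest {e w} : REELang e w → w.head = w.lastVal → REELang (.eqTest e) w
  | neTest {e w} : REELang e w → w.head ≠ w.lastVal → REELang (.neTest e) w

/-- A data graph: labeled edges over node type `V` and data values on nodes. -/
structure DataGraph (V A D : Type) where
  E : Set (V × A × V)
  ρ : V → D

/-- `Connects G u w v`: the data path `w` connects node `u` to node `v` in `G`. -/
inductive Connects {V A D : Type} (G : DataGraph V A D) : V → DataPath A D → V → Prop
  | nil (u : V) : Connects G u ⟨G.ρ u, []⟩ u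
  | cons {u v x : V} {a : A} {t : List (A × D)} :
      (u, a, v) ∈ G.E → Connects G v ⟨G.ρ v, t⟩ x →
      Connects G u ⟨G.ρ u, (a, G.ρ v) :: t⟩ x

/-- A block `↓r̄.a[c]` of a basic REM. -/
abbrev Block (A : Type) (k : ℕ) := List (Fin k) × A × Cond k

/-- The REM `↓r̄.a[c]` corresponding to a block. -/
def blockREM {A : Type} {k : ℕ} (b : Block A k) : REM A k :=
  .bind b.1 (.test (.letter b.2.1) b.2.2)

/-- The basic `k`-REM `↓r̄₁.a₁[c₁] · … · ↓r̄_m.a_m[c_m]` given by a list of blocks. -/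
def basicREM {A : Type} {k : ℕ} : List (Block A k) → REM A k
  | [] => .eps
  | [b] => blockREM b
  | b :: bs => .concat (blockREM b) (basicREM bs)

/-- `e` is a `k`-REM witness for `(u, v)` in `S`: some data path in its language
connects `u` to `v`, and every data path in its language only connects pairs in `S`. -/
def IsWitness {V A D : Type} {k : ℕ} (G : DataGraph V A D) (S : Set (V × V))
    (u v : V) (bs : List (Block A k)) : Prop :=
  (∃ w : DataPath A D, w ∈ REMLang (basicREM bs) ∧ Connects G u w v) ∧
  (∀ (u' v' : V) (w : DataPath A D),
      w ∈ REMLang (basicREM bs) → Connects G u' w v' → (u', v') ∈ S)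

/-- A single transition of the `k`-assignment graph `T_G`, labeled by a block. -/
def AssignStep {V A D : Type} {k : ℕ} (G : DataGraph V A D) (b : Block A k)
    (s s' : V × (Fin k → Option D)) : Prop :=
  (s.1, b.2.1, s'.1) ∈ G.E ∧ s'.2 = updReg s.2 b.1 (G.ρ s.1) ∧
    CondSat (G.ρ s'.1) s'.2 b.2.2

/-- A run in the `k`-assignment graph `T_G` along the blocks of a basic `k`-REM. -/
inductive AssignRun {V A D : Type} {k : ℕ} (G : DataGraph V A D) :
    List (Block A k) → V × (Fin k → Option D) → V × (Fin k → Option D) → Prop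
  | nil (s : V × (Fin k → Option D)) : AssignRun G [] s s
  | cons {b bs s s' s''} : AssignStep G b s s' → AssignRun G bs s' s'' →
      AssignRun G (b :: bs) s s''

/-- The binary relation `S_e` defined by an REE `e` on a data graph `G`. -/
def REEEval {V A D : Type} (G : DataGraph V A D) (e : REE A) : Set (V × V) :=
  {p : V × V | ∃ w : DataPath A D, REELang e w ∧ Connects G p.1 w p.2}

/-- Composition of binary relations. -/
def relComp {V : Type} (S₁ S₂ : Set (V × V)) : Set (V × V) :=
  {p : V × V | ∃ z : V, (p.1, z) ∈ S₁ ∧ (z, p.2) ∈ S₂}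

/-- The `=`-restriction `S^=` of a relation. -/
def eqRes {V A D : Type} (G : DataGraph V A D) (S : Set (V × V)) : Set (V × V) :=
  {p ∈ S | G.ρ p.1 = G.ρ p.2}

/-- The `≠`-restriction `S^≠` of a relation. -/
def neRes {V A D : Type} (G : DataGraph V A D) (S : Set (V × V)) : Set (V × V) :=
  {p ∈ S | G.ρ p.1 ≠ G.ρ p.2}

/-- Membership in the closure of a set `B` of binary relations under `+` (union)
and `∘` (composition). -/
inductive InClosure {V : Type} (B : Set (Set (V × V))) : Set (V × V) → Prop
  | base {S} : S ∈ B → InClosure B S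
  | union {S₁ S₂} : InClosure B S₁ → InClosure B S₂ → InClosure B (S₁ ∪ S₂)
  | comp {S₁ S₂} : InClosure B S₁ → InClosure B S₂ → InClosure B (relComp S₁ S₂)

/-- The base set `B₀ = {S_ε} ∪ {S_a | a ∈ Σ}`. -/
def B0 {V A D : Type} (G : DataGraph V A D) : Set (Set (V × V)) :=
  {S | S = REEEval G .eps ∨ ∃ a : A, S = REEEval G (.letter a)}

/-- The levels `L_i` of binary relations on a data graph. -/
def Level {V A D : Type} (G : DataGraph V A D) : ℕ → Set (Set (V × V))
  | 0 => {S | InClosure (B0 G) S}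
  | i + 1 => {S | InClosure
      ((Level G i) ∪ (eqRes G '' (Level G i)) ∪ (neRes G '' (Level G i))) S}

/-- The identity relation (neutral element for composition). -/
def relId (V : Type) : Set (V × V) := {p : V × V | p.1 = p.2}

/-- `LabelConnects G u l v`: some path from `u` to `v` in `G` has label word `l`. -/
inductive LabelConnects {V A D : Type} (G : DataGraph V A D) : V → List A → V → Prop
  | nil (u : V) : LabelConnects G u [] u
  | cons {u v x : V} {a : A} {l : List A} :
      (u, a, v) ∈ G.E → LabelConnects G v l x → LabelConnects G u (a :: l) x

/-- `q` is reachable from `p` in `G`. -/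
def Reachable {V A D : Type} (G : DataGraph V A D) (p q : V) : Prop :=
  ∃ w : DataPath A D, Connects G p w q

/-- Data graph homomorphism: preserves labeled edges and, on reachable pairs,
preserves and reflects equality of data values. -/
def IsDGHom {V A D : Type} (G : DataGraph V A D) (h : V → V) : Prop :=
  (∀ (p q : V) (a : A), (p, a, q) ∈ G.E → (h p, a, h q) ∈ G.E) ∧
  (∀ p q : V, Reachable G p q → (G.ρ p = G.ρ q ↔ G.ρ (h p) = G.ρ (h q)))

/-- A conjunctive regular data path query of arity `r`:
`Ans(z̄) := ⋀_i x_i →[e_i] y_i` where each `e_i` is an REM. -/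
structure CRDPQ (A : Type) (r : ℕ) where
  nvars : ℕ
  m : ℕ
  src : Fin m → Fin nvars
  tgt : Fin m → Fin nvars
  nreg : Fin m → ℕ
  expr : (i : Fin m) → REM A (nreg i)
  out : Fin r → Fin nvars

/-- The answer `Q(G)` of a CRDPQ on a data graph. -/
def CRDPQEval {V A D : Type} {r : ℕ} (G : DataGraph V A D) (Q : CRDPQ A r) :
    Set (Fin r → V) :=
  {t | ∃ μ : Fin Q.nvars → V,
        (∀ i : Fin Q.m, ∃ w : DataPath A D,
            w ∈ REMLang (Q.expr i) ∧ Connects G (μ (Q.src i)) w (μ (Q.tgt i))) ∧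
        t = μ ∘ Q.out}

/-- `S` is definable by a union of conjunctive regular data path queries. -/
def UCRDPQDefinable {V A D : Type} {r : ℕ} (G : DataGraph V A D)
    (S : Set (Fin r → V)) : Prop :=
  ∃ Qs : List (CRDPQ A r), S = {t | ∃ Q ∈ Qs, t ∈ CRDPQEval G Q}

section WitnessAux

variable {A D : Type} {k : ℕ}

theorem updReg_nil (σ : Fin k → Option D) (d : D) : updReg σ [] d = σ := by
  funext i; simp [updReg]

theorem updReg_swap (σ : Fin k → Option D) (l₁ l₂ : List (Fin k)) (d : D) :
    updReg (updReg σ l₁ d) l₂ d = updReg σ (l₁ ++ l₂) d := by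
  funext i; simp only [updReg, List.mem_append]
  by_cases h1 : i ∈ l₁ <;> by_cases h2 : i ∈ l₂ <;> simp [h1, h2]

/-- Two (value, assignment) pairs are compatible if registers agree about
equality with the current value. -/
def Compat (d : D) (σ : Fin k → Option D) (d' : D) (σ' : Fin k → Option D) : Prop :=
  ∀ j, σ j = some d ↔ σ' j = some d'

theorem Compat.updReg {d d' : D} {σ σ' : Fin k → Option D} (h : Compat d σ d' σ')
    (rs : List (Fin k)) : Compat d (updReg σ rs d) d' (updReg σ' rs d') := by
  intro j; unfold _root_.updReg; split_ifs <;> simp [h j]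

theorem condSat_congr {d d' : D} {σ σ' : Fin k → Option D} (h : Compat d σ d' σ') :
    ∀ c : Cond k, CondSat d σ c ↔ CondSat d' σ' c
  | .top => Iff.rfl
  | .eq i => h i
  | .ne i => not_congr (h i)
  | .conj c₁ c₂ => and_congr (condSat_congr h c₁) (condSat_congr h c₂)
  | .disj c₁ c₂ => or_congr (condSat_congr h c₁) (condSat_congr h c₂)
  | .neg c => not_congr (condSat_congr h c)

open Classical in
/-- The literal describing whether register `j` currently equals `d`. -/
noncomputable def cond1 (σ : Fin k → Option D) (d : D) (j : Fin k) : Cond k :=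
  if σ j = some d then .eq j else .ne j

theorem cond1_sat {σ τ : Fin k → Option D} {d d' : D} (j : Fin k) :
    CondSat d' τ (cond1 σ d j) ↔ (σ j = some d ↔ τ j = some d') := by
  unfold cond1; split_ifs with hs <;> simp [CondSat, hs]

/-- The complete atom of `(d, σ)`. -/
noncomputable def atomCond (σ : Fin k → Option D) (d : D) : Cond k :=
  (List.finRange k).foldr (fun j c => .conj (cond1 σ d j) c) .top

theorem atomCond_sat {σ τ : Fin k → Option D} {d d' : D} :
    CondSat d' τ (atomCond σ d) ↔ Compat d σ d' τ := by
  have key : ∀ l : List (Fin k),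
      CondSat d' τ (l.foldr (fun j c => .conj (cond1 σ d j) c) .top)
        ↔ ∀ j ∈ l, (σ j = some d ↔ τ j = some d') := by
    intro l
    induction l with
    | nil => simp [CondSat]
    | cons a l ih => simp [CondSat, cond1_sat, ih, List.forall_mem_cons]
  constructor
  · intro h j; exact (key (List.finRange k)).mp h j (List.mem_finRange j)
  · intro h; exact (key (List.finRange k)).mpr fun j _ => h j

@[simp] theorem DataPath.lastVal_mk_nil (d : D) :
    (⟨d, []⟩ : DataPath A D).lastVal = d := rfl

@[simp] theorem DataPath.lastVal_one (d₁ d₂ : D) (a : A) :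
    (⟨d₁, [(a, d₂)]⟩ : DataPath A D).lastVal = d₂ := by
  simp [DataPath.lastVal]

@[simp] theorem DataPath.head_comp (w₁ w₂ : DataPath A D) :
    (w₁.comp w₂).head = w₁.head := rfl

@[simp] theorem DataPath.comp_nil (w : DataPath A D) (d : D) :
    w.comp ⟨d, []⟩ = w := by
  cases w; simp [DataPath.comp]

theorem DataPath.comp_assoc (w₁ w₂ w₃ : DataPath A D) :
    (w₁.comp w₂).comp w₃ = w₁.comp (w₂.comp w₃) := by
  simp [DataPath.comp]

theorem DataPath.lastVal_comp {w₁ w₂ : DataPath A D} (h : w₁.lastVal = w₂.head) :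
    (w₁.comp w₂).lastVal = w₂.lastVal := by
  rcases w₂ with ⟨d, t⟩
  rcases t.eq_nil_or_concat with rfl | ⟨t', p, rfl⟩
  · simp only [DataPath.comp_nil, DataPath.lastVal_mk_nil]
    simpa using h
  · simp [DataPath.comp, DataPath.lastVal, ← List.append_assoc, List.getLast?_concat]

theorem REMSat.eps_inv {w : DataPath A D} {σ τ : Fin k → Option D}
    (h : REMSat (.eps : REM A k) w σ τ) : w.tail = [] ∧ τ = σ := by
  cases h; exact ⟨rfl, rfl⟩

theorem blockREM_iff {rs : List (Fin k)} {a : A} {c : Cond k} {w : DataPath A D}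
    {σ τ : Fin k → Option D} :
    REMSat (blockREM (rs, a, c)) w σ τ ↔
      ∃ d₂ : D, w.tail = [(a, d₂)] ∧ τ = updReg σ rs w.head ∧ CondSat d₂ τ c := by
  constructor
  · intro h
    have h' : REMSat (.bind rs (.test (.letter a) c)) w σ τ := h
    cases h' with
    | bind h1 =>
      cases h1 with
      | test h2 hc =>
        cases h2 with
        | letter _ d₁ d₂ _ => exact ⟨d₂, rfl, rfl, by simpa using hc⟩
  · rintro ⟨d₂, ht, rfl, hc⟩
    obtain ⟨d₁, t⟩ := w
    cases ht
    have hstep : REMSat (REM.test (REM.letter a) c) (⟨d₁, [(a, d₂)]⟩ : DataPath A D)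
        (updReg σ rs d₁) (updReg σ rs d₁) :=
      REMSat.test (REMSat.letter a d₁ d₂ _) (by simpa using hc)
    exact REMSat.bind hstep

theorem basic_cons_iff {b : Block A k} {l : List (Block A k)} {w : DataPath A D}
    {σ τ : Fin k → Option D} :
    REMSat (basicREM (b :: l)) w σ τ ↔
      ∃ (w₁ w₂ : DataPath A D) (μ : Fin k → Option D), w = w₁.comp w₂ ∧
        w₁.lastVal = w₂.head ∧ REMSat (blockREM b) w₁ σ μ ∧
        REMSat (basicREM l) w₂ μ τ := by
  cases l with
  | nil =>
    constructor
    · intro h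
      exact ⟨w, ⟨w.lastVal, []⟩, τ, (w.comp_nil _).symm, rfl, h, REMSat.eps _ _⟩
    · rintro ⟨w₁, w₂, μ, rfl, hm, h1, h2⟩
      obtain ⟨ht, rfl⟩ := h2.eps_inv
      rcases w₂ with ⟨d, t⟩
      cases ht
      rwa [DataPath.comp_nil]
  | cons c l' =>
    constructor
    · intro h
      cases h with
      | concat hm h1 h2 => exact ⟨_, _, _, rfl, hm, h1, h2⟩
    · rintro ⟨w₁, w₂, μ, rfl, hm, h1, h2⟩
      exact REMSat.concat hm h1 h2

theorem basic_append : ∀ (l₁ : List (Block A k)) {l₂ : List (Block A k)}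
    {w₁ w₂ : DataPath A D} {σ μ τ : Fin k → Option D},
    w₁.lastVal = w₂.head → REMSat (basicREM l₁) w₁ σ μ → REMSat (basicREM l₂) w₂ μ τ →
    REMSat (basicREM (l₁ ++ l₂)) (w₁.comp w₂) σ τ := by
  intro l₁
  induction l₁ with
  | nil =>
    intro l₂ w₁ w₂ σ μ τ hm h1 h2
    obtain ⟨ht, rfl⟩ := h1.eps_inv
    rcases w₁ with ⟨d, t⟩
    cases ht
    have he : (⟨d, []⟩ : DataPath A D).comp w₂ = w₂ := by
      rcases w₂ with ⟨d₂, t₂⟩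
      have : d = d₂ := by simpa using hm
      simp [DataPath.comp, this]
    rw [List.nil_append, he]; exact h2
  | cons b l ih =>
    intro l₂ w₁ w₂ σ μ τ hm h1 h2
    rw [List.cons_append]
    obtain ⟨v₁, v₂, ν, rfl, hm', hb, hrest⟩ := basic_cons_iff.mp h1
    rw [DataPath.lastVal_comp hm'] at hm
    rw [DataPath.comp_assoc]
    exact basic_cons_iff.mpr ⟨v₁, v₂.comp w₂, ν, rfl, by simpa using hm', hb,
      ih hm hrest h2⟩

theorem basic_split : ∀ (l₁ : List (Block A k)) {l₂ : List (Block A k)}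
    {w : DataPath A D} {σ τ : Fin k → Option D},
    REMSat (basicREM (l₁ ++ l₂)) w σ τ →
    ∃ (w₁ w₂ : DataPath A D) (μ : Fin k → Option D), w = w₁.comp w₂ ∧
      w₁.lastVal = w₂.head ∧ REMSat (basicREM l₁) w₁ σ μ ∧
      REMSat (basicREM l₂) w₂ μ τ := by
  intro l₁
  induction l₁ with
  | nil =>
    intro l₂ w σ τ h
    refine ⟨⟨w.head, []⟩, w, σ, ?_, rfl, REMSat.eps _ _, h⟩
    cases w; simp [DataPath.comp]
  | cons b l ih =>
    intro l₂ w σ τ h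
    rw [List.cons_append] at h
    obtain ⟨v₁, v₂, ν, rfl, hm, hb, hrest⟩ := basic_cons_iff.mp h
    obtain ⟨u₁, u₂, μ, rfl, hm2, hr1, hr2⟩ := ih hrest
    refine ⟨v₁.comp u₁, u₂, μ, (DataPath.comp_assoc _ _ _).symm, ?_,
      basic_cons_iff.mpr ⟨v₁, u₁, ν, rfl, by simpa using hm, hb, hr1⟩, hr2⟩
    rw [DataPath.lastVal_comp (by simpa using hm)]
    exact hm2

theorem basic_prepend {rs : List (Fin k)} {b : Block A k} {l : List (Block A k)}
    {w : DataPath A D} {σ τ : Fin k → Option D} :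
    REMSat (basicREM ((rs ++ b.1, b.2) :: l)) w σ τ ↔
      REMSat (basicREM (b :: l)) w (updReg σ rs w.head) τ := by
  obtain ⟨rs₀, a, c⟩ := b
  rw [basic_cons_iff, basic_cons_iff]
  constructor
  · rintro ⟨w₁, w₂, μ, rfl, hm, hb, hrest⟩
    obtain ⟨d₂, ht, rfl, hc⟩ := blockREM_iff.mp hb
    refine ⟨w₁, w₂, _, rfl, hm, blockREM_iff.mpr ⟨d₂, ht, ?_, hc⟩, hrest⟩
    simp only [DataPath.head_comp]
    rw [updReg_swap]
  · rintro ⟨w₁, w₂, μ, rfl, hm, hb, hrest⟩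
    obtain ⟨d₂, ht, rfl, hc⟩ := blockREM_iff.mp hb
    refine ⟨w₁, w₂, _, rfl, hm, blockREM_iff.mpr ⟨d₂, ht, ?_, hc⟩, hrest⟩
    simp only [DataPath.head_comp]
    rw [updReg_swap]

/-- The inductive package: a basic REM `bs` simulating `e` on `w`, together with
the pending end-of-word register bindings `rs`. -/
def Pack (e : REM A k) (w : DataPath A D) (σ σ'' : Fin k → Option D) : Prop :=
  ∃ (bs : List (Block A k)) (rs : List (Fin k)) (σb : Fin k → Option D),
    REMSat (basicREM bs) w σ σb ∧ σ'' = updReg σb rs w.lastVal ∧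
    ∀ w' σt τ, REMSat (basicREM bs) w' σt τ → Compat w.head σ w'.head σt →
      ∃ σt'', REMSat e w' σt σt'' ∧ Compat w.lastVal σ'' w'.lastVal σt'' ∧
        σt'' = updReg τ rs w'.lastVal

theorem Pack.mono {e e' : REM A k} {w : DataPath A D} {σ σ'' : Fin k → Option D}
    (h : Pack e w σ σ'')
    (hmono : ∀ {w' : DataPath A D} {σt σt'' : Fin k → Option D},
      REMSat e w' σt σt'' → REMSat e' w' σt σt'') :
    Pack e' w σ σ'' := by
  obtain ⟨bs, rs, σb, h1, h2, h3⟩ := h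
  refine ⟨bs, rs, σb, h1, h2, fun w' σt τ hs hc => ?_⟩
  obtain ⟨σt'', ha, hb, hcc⟩ := h3 w' σt τ hs hc
  exact ⟨σt'', hmono ha, hb, hcc⟩

theorem Pack.combine {e₁ e₂ E : REM A k} {w₁ w₂ : DataPath A D}
    {σ σ₁ σ'' : Fin k → Option D}
    (hm : w₁.lastVal = w₂.head)
    (hbuild : ∀ {v₁ v₂ : DataPath A D} {σt σt₁ σt₂ : Fin k → Option D},
      v₁.lastVal = v₂.head → REMSat e₁ v₁ σt σt₁ → REMSat e₂ v₂ σt₁ σt₂ →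
      REMSat E (v₁.comp v₂) σt σt₂)
    (P₁ : Pack e₁ w₁ σ σ₁) (P₂ : Pack e₂ w₂ σ₁ σ'') :
    Pack E (w₁.comp w₂) σ σ'' := by
  obtain ⟨bs₁, rs₁, σb₁, s₁, r₁, rep₁⟩ := P₁
  obtain ⟨bs₂, rs₂, σb₂, s₂, r₂, rep₂⟩ := P₂
  cases bs₂ with
  | nil =>
    obtain ⟨ht, rfl⟩ := s₂.eps_inv
    rcases w₂ with ⟨d₂, t₂⟩
    cases ht
    have hm' : w₁.lastVal = d₂ := hm
    refine ⟨bs₁, rs₁ ++ rs₂, σb₁, ?_, ?_, ?_⟩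
    · rw [DataPath.comp_nil]; exact s₁
    · rw [DataPath.comp_nil, r₂, r₁, DataPath.lastVal_mk_nil, ← hm', updReg_swap]
    · intro w' σt τ hs hc
      obtain ⟨σt₁, he₁, hcmp₁, hrel₁⟩ := rep₁ w' σt τ hs (by simpa using hc)
      obtain ⟨σt₂, he₂, hcmp₂, hrel₂⟩ := rep₂ ⟨w'.lastVal, []⟩ σt₁ σt₁
        (REMSat.eps _ _) (by
          have h2 : Compat d₂ σb₂ w'.lastVal σt₁ := hm' ▸ hcmp₁
          simpa using h2)
      refine ⟨σt₂, ?_, ?_, ?_⟩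
      · have := hbuild (v₁ := w') (v₂ := ⟨w'.lastVal, []⟩) rfl he₁ he₂
        rwa [DataPath.comp_nil] at this
      · rw [DataPath.lastVal_comp hm]
        simpa using hcmp₂
      · rw [hrel₂, hrel₁]
        simp only [DataPath.lastVal_mk_nil]
        rw [updReg_swap]
  | cons b rest =>
    refine ⟨bs₁ ++ (rs₁ ++ b.1, b.2) :: rest, rs₂, σb₂, ?_, ?_, ?_⟩
    · refine basic_append bs₁ hm s₁ (basic_prepend.mpr ?_)
      rw [← hm, ← r₁]; exact s₂
    · rw [DataPath.lastVal_comp hm]; exact r₂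
    · intro w' σt τ hs hc
      obtain ⟨v₁, v₂, μ, rfl, hm', h1, h2⟩ := basic_split bs₁ hs
      obtain ⟨σt₁, he₁, hcmp₁, hrel₁⟩ := rep₁ v₁ σt μ h1 (by simpa using hc)
      have h2' := basic_prepend.mp h2
      have hμ : updReg μ rs₁ v₂.head = σt₁ := by rw [← hm', hrel₁]
      rw [hμ] at h2'
      obtain ⟨σt₂, he₂, hcmp₂, hrel₂⟩ := rep₂ v₂ σt₁ τ h2'
        (by rw [← hm, ← hm']; exact hcmp₁)
      refine ⟨σt₂, hbuild hm' he₁ he₂, ?_, ?_⟩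
      · rw [DataPath.lastVal_comp hm, DataPath.lastVal_comp hm']; exact hcmp₂
      · rw [DataPath.lastVal_comp hm']; exact hrel₂

theorem rem_pack {e : REM A k} {w : DataPath A D} {σ σ'' : Fin k → Option D}
    (h : REMSat e w σ σ'') : Pack e w σ σ'' := by
  induction h with
  | eps d σ =>
    refine ⟨[], [], σ, REMSat.eps d σ, (updReg_nil σ _).symm, ?_⟩
    intro w' σt τ hs hc
    obtain ⟨ht, rfl⟩ := hs.eps_inv
    rcases w' with ⟨d', t'⟩
    cases ht
    exact ⟨τ, REMSat.eps d' τ, hc, (updReg_nil τ _).symm⟩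
  | letter a d₁ d₂ σ =>
    refine ⟨[([], a, atomCond σ d₂)], [], σ, ?_, (updReg_nil σ _).symm, ?_⟩
    · exact blockREM_iff.mpr ⟨d₂, rfl, (updReg_nil σ d₁).symm,
        atomCond_sat.mpr fun j => Iff.rfl⟩
    · intro w' σt τ hs hc
      obtain ⟨d₂', ht, rfl, hcnd⟩ := blockREM_iff.mp hs
      rcases w' with ⟨d₁', t'⟩
      cases ht
      rw [updReg_nil] at hcnd
      refine ⟨σt, REMSat.letter a d₁' d₂' σt, ?_, by rw [updReg_nil, updReg_nil]⟩
      simpa using atomCond_sat.mp hcnd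
  | plusL h ih => exact ih.mono REMSat.plusL
  | plusR h ih => exact ih.mono REMSat.plusR
  | concat hm h₁ h₂ ih₁ ih₂ =>
    exact Pack.combine hm (fun hm' a b => REMSat.concat hm' a b) ih₁ ih₂
  | iterBase h ih => exact ih.mono REMSat.iterBase
  | iterStep hm h₁ h₂ ih₁ ih₂ =>
    exact Pack.combine hm (fun hm' a b => REMSat.iterStep hm' a b) ih₁ ih₂
  | test h hc ih =>
    obtain ⟨bs, rs, σb, s, r, rep⟩ := ih
    refine ⟨bs, rs, σb, s, r, ?_⟩
    intro w' σt τ hs hcp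
    obtain ⟨σt'', ha, hb, hrel⟩ := rep w' σt τ hs hcp
    exact ⟨σt'', REMSat.test ha ((condSat_congr hb _).mp hc), hb, hrel⟩
  | @bind rs₀ e₀ w σ σ'' h ih =>
    obtain ⟨bs, rs, σb, s, r, rep⟩ := ih
    cases bs with
    | nil =>
      obtain ⟨ht, rfl⟩ := s.eps_inv
      rcases w with ⟨d, t⟩
      cases ht
      refine ⟨[], rs₀ ++ rs, σ, REMSat.eps d σ, ?_, ?_⟩
      · simp only [r, DataPath.lastVal_mk_nil]
        rw [updReg_swap]
      · intro w' σt τ hs hcp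
        obtain ⟨ht', rfl⟩ := hs.eps_inv
        rcases w' with ⟨d', t'⟩
        cases ht'
        obtain ⟨σt'', ha, hb, hrel⟩ := rep ⟨d', []⟩ (updReg τ rs₀ d')
          (updReg τ rs₀ d') (REMSat.eps _ _) (hcp.updReg rs₀)
        refine ⟨σt'', REMSat.bind ha, hb, ?_⟩
        rw [hrel, DataPath.lastVal_mk_nil, updReg_swap]
    | cons b rest =>
      refine ⟨(rs₀ ++ b.1, b.2) :: rest, rs, σb, basic_prepend.mpr s, r, ?_⟩
      intro w' σt τ hs hcp
      have hs' := basic_prepend.mp hs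
      obtain ⟨σt'', ha, hb, hrel⟩ := rep w' _ τ hs' (hcp.updReg rs₀)
      exact ⟨σt'', REMSat.bind ha, hb, hrel⟩

end WitnessAux

/-- if a `k`-REM `e` defines `S` on `G`, then every pair `(u,v) ∈ S`
has a `k`-REM witness (a basic `k`-REM) whose language is contained in `L(e)`. -/
theorem witness_exists {V A D : Type} [Fintype V] [Fintype A] [Countable D] [Infinite D]
    (G : DataGraph V A D) {k : ℕ} (e : REM A k) (S : Set (V × V))
    (hdef : S = {p : V × V | ∃ w : DataPath A D, w ∈ REMLang e ∧ Connects G p.1 w p.2})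
    (u v : V) (huv : (u, v) ∈ S) :
    ∃ bs : List (Block A k),
      (REMLang (basicREM bs) : Set (DataPath A D)) ⊆ REMLang e ∧
      IsWitness G S u v bs := by
  have hS := huv
  rw [hdef] at hS
  obtain ⟨w, ⟨σ', hsat⟩, hconn⟩ := hS
  obtain ⟨bs, rs, σb, hsound, -, hreplay⟩ := rem_pack hsat
  have hsub : (REMLang (basicREM bs) : Set (DataPath A D)) ⊆ REMLang e := by
    rintro w' ⟨τ, hw'⟩
    obtain ⟨σt'', h1, -, -⟩ := hreplay w' _ _ hw' (fun j => by simp)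
    exact ⟨σt'', h1⟩
  refine ⟨bs, hsub, ⟨w, ⟨σb, hsound⟩, hconn⟩, ?_⟩
  intro u' v' w' hw' hc
  rw [hdef]
  exact ⟨w', hsub hw', hc⟩
end

section
/- Let G be a data graph, S a binary relation on its nodes, and (u,v) ∈ S. A basic k-REM e is a k-REM witness for (u,v) in S if and only if (i) (u, ⊥^k) →e (v, σ) in the k-assignment graph T_G for some assignment σ, and (ii) whenever (u′, ⊥^k) →e (v′, σ) in T_G for some nodes u′, v′ and assignment σ, then (u′,v′) ∈ S. -/
section Aux

variable {V A D : Type} {k : ℕ}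

lemma lastVal_cons (p : A × D) (d : D) (t : List (A × D)) :
    DataPath.lastVal ⟨d, p :: t⟩ = DataPath.lastVal ⟨p.2, t⟩ := by
  cases t with
  | nil => simp [DataPath.lastVal]
  | cons q t' =>
      obtain ⟨x, hx⟩ := Option.isSome_iff_exists.mp
        (List.getLast?_isSome.mpr (by simp : (q :: t') ≠ []))
      simp [DataPath.lastVal, List.getLast?_cons_cons, hx]

lemma connects_head {G : DataGraph V A D} {u v : V} {w : DataPath A D}
    (h : Connects G u w v) : w.head = G.ρ u := by
  cases h <;> rfl

lemma connects_last {G : DataGraph V A D} {u v : V} {w : DataPath A D}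
    (h : Connects G u w v) : w.lastVal = G.ρ v := by
  induction h with
  | nil => simp [DataPath.lastVal]
  | cons _ _ ih => rw [lastVal_cons]; exact ih

lemma connects_comp {G : DataGraph V A D} {u z v : V} {w₁ w₂ : DataPath A D}
    (h₁ : Connects G u w₁ z) (h₂ : Connects G z w₂ v) :
    Connects G u (w₁.comp w₂) v := by
  induction h₁ with
  | nil u =>
      have hh := connects_head h₂
      cases w₂ with
      | mk hd tl =>
          have hd' : hd = G.ρ u := hh
          subst hd'
          simpa [DataPath.comp] using h₂
  | cons he _ ih =>
      exact Connects.cons he (ih h₂)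

lemma connects_split {G : DataGraph V A D} {u v : V} {d : D}
    {t₁ t₂ : List (A × D)} (h : Connects G u ⟨d, t₁ ++ t₂⟩ v) :
    ∃ z : V, Connects G u ⟨d, t₁⟩ z ∧ Connects G z ⟨G.ρ z, t₂⟩ v := by
  induction t₁ generalizing u d with
  | nil =>
      have hh : d = G.ρ u := connects_head h
      subst hh
      exact ⟨u, Connects.nil u, by simpa using h⟩
  | cons p t₁' ih =>
      cases h with
      | cons he h' =>
          obtain ⟨z, hz₁, hz₂⟩ := ih h'
          exact ⟨z, Connects.cons he hz₁, hz₂⟩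

lemma blockSat_iff {b : Block A k} {w : DataPath A D}
    {σ σ' : Fin k → Option D} :
    REMSat (blockREM b) w σ σ' ↔
      ∃ d₁ d₂ : D, w = ⟨d₁, [(b.2.1, d₂)]⟩ ∧ σ' = updReg σ b.1 d₁ ∧
        CondSat d₂ σ' b.2.2 := by
  constructor
  · rintro h
    cases h with
    | bind h1 =>
        cases h1 with
        | test h2 hc =>
            cases h2 with
            | letter a d₁ d₂ =>
                refine ⟨d₁, d₂, rfl, rfl, ?_⟩
                simpa [DataPath.lastVal] using hc
  · rintro ⟨d₁, d₂, rfl, rfl, hc⟩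
    exact REMSat.bind (REMSat.test (REMSat.letter _ _ _ _)
      (by simpa [DataPath.lastVal] using hc))

lemma block_to_step {G : DataGraph V A D} {b : Block A k} {u v : V}
    {w : DataPath A D} {σ σ' : Fin k → Option D}
    (hs : REMSat (blockREM b) w σ σ') (hc : Connects G u w v) :
    AssignStep G b (u, σ) (v, σ') := by
  obtain ⟨d₁, d₂, rfl, hσ, hcond⟩ := blockSat_iff.mp hs
  cases hc with
  | cons he h' =>
      cases h' with
      | nil =>
          exact ⟨he, hσ, hcond⟩

lemma step_to_block {G : DataGraph V A D} {b : Block A k} {u v : V}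
    {σ σ' : Fin k → Option D} (h : AssignStep G b (u, σ) (v, σ')) :
    REMSat (blockREM b) (⟨G.ρ u, [(b.2.1, G.ρ v)]⟩ : DataPath A D) σ σ' ∧
      Connects G u (⟨G.ρ u, [(b.2.1, G.ρ v)]⟩ : DataPath A D) v := by
  obtain ⟨he, hσ, hc⟩ := h
  exact ⟨blockSat_iff.mpr ⟨G.ρ u, G.ρ v, rfl, hσ, hc⟩,
    Connects.cons he (Connects.nil v)⟩

lemma sat_to_run {G : DataGraph V A D} {u v : V}
    {σ σ' : Fin k → Option D} (bs : List (Block A k)) {w : DataPath A D}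
    (hs : REMSat (basicREM bs) w σ σ') (hc : Connects G u w v) :
    AssignRun G bs (u, σ) (v, σ') := by
  induction bs generalizing u v w σ σ' with
  | nil =>
      cases hs with
      | eps d =>
          cases hc with
          | nil => exact AssignRun.nil _
  | cons b bs' ih =>
      cases bs' with
      | nil =>
          exact AssignRun.cons (block_to_step hs hc) (AssignRun.nil _)
      | cons b₂ rest =>
          have hs' : REMSat (.concat (blockREM b) (basicREM (b₂ :: rest))) w σ σ' := hs
          cases hs' with
          | concat hlast h₁ h₂ =>
              rename_i w₁ w₂ σ₁
              obtain ⟨z, hz₁, hz₂⟩ :=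
                connects_split (t₁ := w₁.tail) (t₂ := w₂.tail) hc
              have hw₁ : Connects G u w₁ z := hz₁
              have hw₂head : w₂.head = G.ρ z := by
                rw [← hlast]; exact connects_last hw₁
              have hw₂ : Connects G z w₂ v := by
                cases w₂ with
                | mk hd tl =>
                    have hd' : hd = G.ρ z := hw₂head
                    subst hd'
                    exact hz₂
              exact AssignRun.cons (block_to_step h₁ hw₁) (ih h₂ hw₂)

lemma run_to_sat {G : DataGraph V A D} {u v : V}
    {σ σ' : Fin k → Option D} (bs : List (Block A k))
    (h : AssignRun G bs (u, σ) (v, σ')) :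
    ∃ w : DataPath A D, REMSat (basicREM bs) w σ σ' ∧ Connects G u w v := by
  induction bs generalizing u v σ σ' with
  | nil =>
      cases h with
      | nil => exact ⟨⟨G.ρ u, []⟩, REMSat.eps _ _, Connects.nil u⟩
  | cons b bs' ih =>
      cases h with
      | cons hstep hrun =>
          rename_i s'
          obtain ⟨z, σ₁⟩ := s'
          obtain ⟨hsat₁, hconn₁⟩ := step_to_block hstep
          obtain ⟨w₂, hsat₂, hconn₂⟩ := ih hrun
          cases bs' with
          | nil =>
              cases hrun with
              | nil => exact ⟨_, hsat₁, hconn₁⟩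
          | cons b₂ rest =>
              refine ⟨(⟨G.ρ u, [(b.2.1, G.ρ z)]⟩ : DataPath A D).comp w₂,
                REMSat.concat ?_ hsat₁ hsat₂,
                connects_comp hconn₁ hconn₂⟩
              rw [connects_head hconn₂]
              simp [DataPath.lastVal]

end Aux

/-- a basic `k`-REM is a `k`-REM witness for `(u,v) ∈ S` iff
(i) it connects `(u,⊥^k)` to `(v,σ)` in the assignment graph for some `σ`, and
(ii) every pair it connects from empty assignments lies in `S`. -/
theorem witness_iff_assignment_runs {V A D : Type}
    [Fintype V] [Fintype A] [Countable D] [Infinite D]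
    (G : DataGraph V A D) (S : Set (V × V)) (u v : V) (huv : (u, v) ∈ S)
    {k : ℕ} (bs : List (Block A k)) :
    IsWitness G S u v bs ↔
      ((∃ σ : Fin k → Option D, AssignRun G bs (u, fun _ => none) (v, σ)) ∧
       (∀ (u' v' : V) (σ : Fin k → Option D),
          AssignRun G bs (u', fun _ => none) (v', σ) → (u', v') ∈ S)) := by
  constructor
  · rintro ⟨⟨w, ⟨σ', hsat⟩, hconn⟩, hall⟩
    refine ⟨⟨σ', sat_to_run bs hsat hconn⟩, ?_⟩
    intro u' v' σ hrun
    obtain ⟨w', hsat', hconn'⟩ := run_to_sat bs hrun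
    exact hall u' v' w' ⟨σ, hsat'⟩ hconn'
  · rintro ⟨⟨σ, hrun⟩, hall⟩
    obtain ⟨w, hsat, hconn⟩ := run_to_sat bs hrun
    refine ⟨⟨w, ⟨σ, hsat⟩, hconn⟩, ?_⟩
    rintro u' v' w' ⟨σ', hsat'⟩ hconn'
    exact hall u' v' σ' (sat_to_run bs hsat' hconn')
end
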